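/- Let f(z) = Σ_{n≥0} a_n z^n with a_0 = 1 and let H_n(t) be the Chow polynomials of the Toeplitz matrix (a_{n-k}). Then Σ_{n≥0} H_n(t) z^n = (1-t)·f(z)/(f(tz) - t·f(z)) as formal power series in z. -/

import Mathlib

open Polynomial

/-- `d`, `H` are the Chow-derangement and Chow polynomials of the Toeplitz matrix
`(a_{n-k})`: `d 0 = 1`, `tⁿ dₙ(1/t) = dₙ`, `Hₙ = Σ_{k≤n} a_{n-k} d_k`, and
`tⁿ Hₙ(1/t) = t·Hₙ` for `n ≥ 1`. -/
def ToeplitzChow {A : Type*} [CommRing A] (a : ℕ → A) (d H : ℕ → A[X]) : Prop :=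
  d 0 = 1 ∧
  (∀ n, (d n).natDegree ≤ n) ∧
  (∀ n, reflect n (d n) = d n) ∧
  (∀ n, H n = ∑ k ∈ Finset.range (n + 1), C (a (n - k)) * d k) ∧
  (∀ n, 1 ≤ n → reflect n (H n) = X * H n)

/-!
Write `D(z) = Σ dₙ zⁿ`. The Toeplitz relation says `Σ Hₙ zⁿ = D(z) f(z)`, and since each `d_k` is
palindromic of degree `k`, reflecting `Hₙ` at degree `n` gives the `n`-th coefficient of
`D(z) f(tz)`. The palindromicity `tⁿ Hₙ(1/t) = t Hₙ` for `n ≥ 1` therefore kills every coefficient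
of `D(z) (f(tz) - t f(z))` except the constant one, which is `1 - t`. Multiplying by `f(z)` gives
the claim.
-/

namespace Polynomial

variable {R : Type*}

theorem reflect_sum [Semiring R] {ι : Type*} (N : ℕ) (s : Finset ι) (f : ι → R[X]) :
    reflect N (∑ i ∈ s, f i) = ∑ i ∈ s, reflect N (f i) := by
  ext j
  simp only [coeff_reflect, finsetSum_coeff]

theorem reflect_eq_X_pow_mul_reflect [CommSemiring R] {p : R[X]} {k n : ℕ}
    (hp : p.natDegree ≤ k) (hkn : k ≤ n) : reflect n p = X ^ (n - k) * reflect k p := by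
  have h := reflect_mul (1 : R[X]) p (F := n - k) (by simp) hp
  rwa [Nat.sub_add_cancel hkn, one_mul, reflect_one] at h

end Polynomial

namespace PowerSeries

theorem mk_sum_range_mul {R : Type*} [Semiring R] (u v : ℕ → R) :
    (mk fun n => ∑ k ∈ Finset.range (n + 1), u k * v (n - k)) = mk u * mk v := by
  ext n
  simp only [coeff_mul, coeff_mk]
  exact (Finset.Nat.sum_antidiagonal_eq_sum_range_succ (fun i j => u i * v j) n).symm

end PowerSeries

namespace ToeplitzChow

variable {A : Type*} [CommRing A] {a : ℕ → A} {d H : ℕ → A[X]}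

theorem H_eq_sum (hdH : ToeplitzChow a d H) (n : ℕ) :
    H n = ∑ k ∈ Finset.range (n + 1), d k * C (a (n - k)) := by
  obtain ⟨-, -, -, hH, -⟩ := hdH
  rw [hH n]
  exact Finset.sum_congr rfl fun k _ => mul_comm _ _

theorem reflect_H_eq_sum (hdH : ToeplitzChow a d H) (n : ℕ) :
    reflect n (H n) = ∑ k ∈ Finset.range (n + 1), d k * (C (a (n - k)) * X ^ (n - k)) := by
  obtain ⟨-, hdeg, hdref, hH, -⟩ := hdH
  rw [hH n, reflect_sum]
  refine Finset.sum_congr rfl fun k hk => ?_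
  have hkn : k ≤ n := Nat.lt_succ_iff.mp (Finset.mem_range.mp hk)
  rw [reflect_C_mul, reflect_eq_X_pow_mul_reflect (hdeg k) hkn, hdref k]
  ring

theorem mk_H (hdH : ToeplitzChow a d H) :
    PowerSeries.mk H = PowerSeries.mk d * PowerSeries.mk fun n => C (a n) := by
  rw [← PowerSeries.mk_sum_range_mul]
  exact congrArg PowerSeries.mk (funext hdH.H_eq_sum)

theorem mk_reflect_H (hdH : ToeplitzChow a d H) :
    (PowerSeries.mk fun n => reflect n (H n)) =
      PowerSeries.mk d * PowerSeries.mk fun n => C (a n) * X ^ n := by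
  rw [← PowerSeries.mk_sum_range_mul]
  exact congrArg PowerSeries.mk (funext hdH.reflect_H_eq_sum)

theorem mk_reflect_H_sub (hdH : ToeplitzChow a d H) (ha : a 0 = 1) :
    (PowerSeries.mk fun n => reflect n (H n)) - PowerSeries.C X * PowerSeries.mk H =
      PowerSeries.C (1 - X) := by
  ext n
  obtain ⟨hd0, -, -, hH, hHref⟩ := hdH
  rw [map_sub, PowerSeries.coeff_C_mul, PowerSeries.coeff_mk, PowerSeries.coeff_mk,
    PowerSeries.coeff_C]
  rcases Nat.eq_zero_or_pos n with rfl | hn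
  · simp [hH 0, hd0, ha]
  · rw [hHref n hn, sub_self, if_neg hn.ne']

end ToeplitzChow

theorem stmt15_general {A : Type*} [CommRing A] (a : ℕ → A) (ha : a 0 = 1)
    (d H : ℕ → A[X]) (hdH : ToeplitzChow a d H) :
    (PowerSeries.mk fun n => H n) *
        (PowerSeries.mk (fun n => C (a n) * X ^ n) -
          PowerSeries.C (R := A[X]) X * PowerSeries.mk fun n => C (a n)) =
      PowerSeries.C (R := A[X]) (1 - X) * PowerSeries.mk fun n => C (a n) := by
  have hD : PowerSeries.mk d *
      (PowerSeries.mk (fun n => C (a n) * X ^ n) -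
        PowerSeries.C (R := A[X]) X * PowerSeries.mk fun n => C (a n)) =
      PowerSeries.C (1 - X) := by
    rw [mul_sub, mul_left_comm, ← hdH.mk_reflect_H, ← hdH.mk_H, hdH.mk_reflect_H_sub ha]
  rw [hdH.mk_H, mul_right_comm, hD, mul_comm]

/-- `Σ Hₙ(t) zⁿ = (1-t)·f(z)/(f(tz) - t f(z))`, stated multiplicatively in
`R[t][[z]]`. -/
theorem stmt15 {A : Type*} [CommRing A] [IsDomain A] (a : ℕ → A) (ha : a 0 = 1)
    (d H : ℕ → A[X]) (hdH : ToeplitzChow a d H) :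
    (PowerSeries.mk fun n => H n) *
        (PowerSeries.mk (fun n => C (a n) * X ^ n) -
          PowerSeries.C (R := A[X]) X * PowerSeries.mk fun n => C (a n)) =
      PowerSeries.C (R := A[X]) (1 - X) * PowerSeries.mk fun n => C (a n) :=
  stmt15_general a ha d H hdH
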